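/- arXiv:2604.08285 — 8 statements merged into one kernel-verified Lean document; each statement's English description precedes it below -/
import Mathlib

section
/- General integral comparison principle: let r₁ ∈ ℝ, let F : [r₁,∞) × ℝ → ℝ be continuous and nonincreasing in its second variable (F(u,x) ≥ F(u,y) whenever x ≤ y), let a : [r₁,∞) → ℝ be continuous and satisfy a(t) − a(s) ≥ ∫ₛᵗ F(u, a(u)) du for all r₁ ≤ s ≤ t, and let φ : [r₁,∞) → ℝ be continuously differentiable with φ'(u) ≤ F(u, φ(u)) for all u ≥ r₁ and φ(r₁) ≤ a(r₁). Then a(r) ≥ φ(r) for all r ≥ r₁. -/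
open intervalIntegral Set

/-! If `a r < φ r`, let `s` be the last point of `[r₁, r]` with `φ s ≤ a s`. On `(s, r)` we have
`a < φ`, so antitonicity of `F` gives `φ' u ≤ F u (φ u) ≤ F u (a u)` there, whence
`φ r - φ s ≤ ∫ₛʳ F u (a u) du ≤ a r - a s`, i.e. `φ r - a r ≤ φ s - a s ≤ 0`. -/

theorem ContinuousOn.exists_last_nonneg {f : ℝ → ℝ} {a b : ℝ} (hab : a ≤ b)
    (hf : ContinuousOn f (Icc a b)) (ha : 0 ≤ f a) (hb : f b < 0) :
    ∃ s ∈ Ico a b, 0 ≤ f s ∧ ∀ u ∈ Ioc s b, f u < 0 := by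
  set S := Icc a b ∩ f ⁻¹' Ici 0
  have hS_compact : IsCompact S :=
    isCompact_Icc.of_isClosed_subset
      (hf.preimage_isClosed_of_isClosed isClosed_Icc isClosed_Ici) inter_subset_left
  obtain ⟨⟨has, hsb⟩, hs⟩ : sSup S ∈ S := hS_compact.sSup_mem ⟨a, ⟨le_rfl, hab⟩, ha⟩
  refine ⟨sSup S, ⟨has, hsb.lt_of_ne ?_⟩, hs, fun u hu => ?_⟩
  · rintro hsb
    exact (hb.trans_le (hsb ▸ hs)).false
  · by_contra! hu_nonneg
    have : u ≤ sSup S :=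
      le_csSup hS_compact.bddAbove ⟨⟨has.trans hu.1.le, hu.2⟩, hu_nonneg⟩
    exact this.not_gt hu.1

theorem integral_comparison_principle_general (r₁ : ℝ) (F : ℝ → ℝ → ℝ) (a φ φ' : ℝ → ℝ)
    (hF_cont : ContinuousOn (fun p : ℝ × ℝ => F p.1 p.2) (Set.Ici r₁ ×ˢ Set.univ))
    (hF_anti : ∀ u ∈ Set.Ici r₁, ∀ x y : ℝ, x ≤ y → F u y ≤ F u x)
    (ha_cont : ContinuousOn a (Set.Ici r₁))
    (ha_int : ∀ s t : ℝ, r₁ ≤ s → s ≤ t → a t - a s ≥ ∫ u in s..t, F u (a u))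
    (hφ_deriv : ∀ u ∈ Set.Ici r₁, HasDerivWithinAt φ (φ' u) (Set.Ici r₁) u)
    (hφ'_le : ∀ u ∈ Set.Ici r₁, φ' u ≤ F u (φ u))
    (hφ₁ : φ r₁ ≤ a r₁) :
    ∀ r ∈ Set.Ici r₁, a r ≥ φ r := by
  have hφ_cont : ContinuousOn φ (Ici r₁) := fun u hu => (hφ_deriv u hu).continuousWithinAt
  have hFa_cont : ContinuousOn (fun u => F u (a u)) (Ici r₁) :=
    hF_cont.comp (continuousOn_id.prodMk ha_cont) fun u hu => ⟨hu, trivial⟩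
  intro r hr
  by_contra! hr_lt
  obtain ⟨s, ⟨hr₁s, hsr⟩, hs, hlt⟩ :=
    ContinuousOn.exists_last_nonneg (f := fun t => a t - φ t) hr
      ((ha_cont.sub hφ_cont).mono Icc_subset_Ici_self) (sub_nonneg.2 hφ₁) (sub_neg.2 hr_lt)
  have hsub : Icc s r ⊆ Ici r₁ := fun u hu => hr₁s.trans hu.1
  have hmem : ∀ u ∈ Ioo s r, u ∈ Ici r₁ := fun u hu => hsub (Ioo_subset_Icc_self hu)
  have hφ_le_integral : φ r - φ s ≤ ∫ u in s..r, F u (a u) :=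
    sub_le_integral_of_hasDeriv_right_of_le hsr.le (hφ_cont.mono hsub)
      (fun u hu => (hφ_deriv u (hmem u hu)).mono (Ioi_subset_Ici (hmem u hu)))
      (hFa_cont.mono hsub).integrableOn_Icc
      (fun u hu => (hφ'_le u (hmem u hu)).trans
        (hF_anti u (hmem u hu) _ _ (sub_neg.1 (hlt u (Ioo_subset_Ioc_self hu))).le))
  linarith [ha_int s r hr₁s hsr.le]

/-- General integral comparison principle: if `F` is continuous and nonincreasing in its
second variable, `a` is continuous and satisfies the integral inequality
`a t - a s ≥ ∫ₛᵗ F u (a u) du`, and `φ` is continuously differentiable with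
`φ' u ≤ F u (φ u)` and `φ r₁ ≤ a r₁`, then `a ≥ φ` on `[r₁, ∞)`. -/
theorem integral_comparison_principle (r₁ : ℝ) (F : ℝ → ℝ → ℝ) (a φ φ' : ℝ → ℝ)
    (hF_cont : ContinuousOn (fun p : ℝ × ℝ => F p.1 p.2) (Set.Ici r₁ ×ˢ Set.univ))
    (hF_anti : ∀ u ∈ Set.Ici r₁, ∀ x y : ℝ, x ≤ y → F u y ≤ F u x)
    (ha_cont : ContinuousOn a (Set.Ici r₁))
    (ha_int : ∀ s t : ℝ, r₁ ≤ s → s ≤ t → a t - a s ≥ ∫ u in s..t, F u (a u))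
    (hφ_deriv : ∀ u ∈ Set.Ici r₁, HasDerivWithinAt φ (φ' u) (Set.Ici r₁) u)
    (hφ'_cont : ContinuousOn φ' (Set.Ici r₁))
    (hφ'_le : ∀ u ∈ Set.Ici r₁, φ' u ≤ F u (φ u))
    (hφ₁ : φ r₁ ≤ a r₁) :
    ∀ r ∈ Set.Ici r₁, a r ≥ φ r :=
  integral_comparison_principle_general r₁ F a φ φ' hF_cont hF_anti ha_cont ha_int hφ_deriv hφ'_le
    hφ₁
end

section
/- Riccati-type lower bound (parabolic case): let r₁ ∈ ℝ and let a : [r₁,∞) → ℝ be continuous with a(r₁) > 0, satisfying the integral inequality a(t) − a(s) ≥ −(1/2) ∫ₛᵗ a(u)² du for all r₁ ≤ s ≤ t. Then for every r ≥ r₁ one has a(r) ≥ 2 / ( r − r₁ + 2/a(r₁) ). -/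
/-!
By the fundamental theorem of calculus, the integral inequality says that `a` is a supersolution
of `a' = -a² / 2` in the Dini sense: the right slopes of `-a` at `x` are eventually below any
`r > a x ^ 2 / 2`. The exact solution with initial value `a r₁` is `(1 / a r₁ + (r - r₁) / 2)⁻¹`.
For `k > 1 / 2`, `y = (1 / a r₁ + k * (r - r₁))⁻¹` satisfies `y' = -k y² < -y² / 2`, a strict
subsolution, so the comparison principle keeps `a` above `y`; then let `k → 1 / 2`.
-/

open intervalIntegral Set Filter Topology

theorem tendsto_slope_integral_nhdsGT {E : Type*} [NormedAddCommGroup E] [NormedSpace ℝ E]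
    [CompleteSpace E] {f : ℝ → E} {x : ℝ} (hf : ContinuousOn f (Ici x)) :
    Tendsto (slope (fun z => ∫ u in x..z, f u) x) (𝓝[>] x) (𝓝 (f x)) := by
  have hderiv : HasDerivWithinAt (fun z => ∫ u in x..z, f u) (f x) (Ici x) x :=
    integral_hasDerivWithinAt_right IntervalIntegrable.refl
      ((hf.mono Ioi_subset_Ici_self).stronglyMeasurableAtFilter_nhdsWithin measurableSet_Ioi x)
      ((hf x self_mem_Ici).mono Ioi_subset_Ici_self)
  exact (hasDerivWithinAt_iff_tendsto_slope' (lt_irrefl x)).1 hderiv.Ioi_of_Ici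

theorem eventually_slope_neg_lt_of_riccati {a : ℝ → ℝ} {x : ℝ} (ha : ContinuousOn a (Ici x))
    (hint : ∀ z, x ≤ z → a z - a x ≥ -(1 / 2) * ∫ u in x..z, a u ^ 2) {r : ℝ}
    (hr : a x ^ 2 / 2 < r) : ∀ᶠ z in 𝓝[>] x, slope (fun y => -a y) x z < r := by
  have hlim := (tendsto_slope_integral_nhdsGT (f := fun u => a u ^ 2) (ha.pow 2)).div_const 2
  filter_upwards [hlim.eventually_lt_const hr, self_mem_nhdsWithin] with z hz (hxz : x < z)
  refine lt_of_le_of_lt ?_ hz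
  calc slope (fun y => -a y) x z = (a x - a z) / (z - x) := by rw [slope_def_field]; ring
    _ ≤ (1 / 2 * ∫ u in x..z, a u ^ 2) / (z - x) := by
        gcongr
        linarith [hint z hxz.le]
    _ = _ := by rw [slope_def_field, integral_same]; ring

theorem riccati_lower_bound_of_half_lt {r₁ : ℝ} {a : ℝ → ℝ} (ha_cont : ContinuousOn a (Ici r₁))
    (ha_pos : 0 < a r₁)
    (ha_int : ∀ s t : ℝ, r₁ ≤ s → s ≤ t → a t - a s ≥ -(1 / 2) * ∫ u in s..t, a u ^ 2)
    {k : ℝ} (hk : 1 / 2 < k) {r : ℝ} (hr : r₁ ≤ r) :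
    (1 / a r₁ + k * (r - r₁))⁻¹ ≤ a r := by
  set g : ℝ → ℝ := fun x => 1 / a r₁ + k * (x - r₁)
  have hg_pos : ∀ x ∈ Ici r₁, 0 < g x := fun x (hx : r₁ ≤ x) => by
    have : 0 ≤ k * (x - r₁) := mul_nonneg (by linarith) (by linarith)
    positivity
  have hg_deriv : ∀ x ∈ Ici r₁, HasDerivAt (fun x => -(g x)⁻¹) (k * (g x)⁻¹ ^ 2) x := by
    intro x hx
    have hg : HasDerivAt g k x :=
      ((((hasDerivAt_id' x).sub_const r₁).const_mul k).const_add _).congr_deriv (mul_one k)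
    exact ((hg.fun_inv (hg_pos x hx).ne').fun_neg).congr_deriv (by rw [inv_pow]; ring)
  have hcomp := image_le_of_liminf_slope_right_lt_deriv_boundary' (f := fun x => -a x)
    (f' := fun x => a x ^ 2 / 2) (B := fun x => -(g x)⁻¹) (B' := fun x => k * (g x)⁻¹ ^ 2)
    (a := r₁) (b := r) (ha_cont.mono Icc_subset_Ici_self).neg
    (fun x hx _ hr => (eventually_slope_neg_lt_of_riccati (ha_cont.mono (Ici_subset_Ici.2 hx.1))
      (fun z hxz => ha_int x z hx.1 hxz) hr).frequently)
    (by simp [g])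
    (fun x hx => (hg_deriv x hx.1).continuousAt.continuousWithinAt)
    (fun x hx => (hg_deriv x hx.1).hasDerivWithinAt)
    (fun x hx hax => by
      have hax : a x = (g x)⁻¹ := neg_injective hax
      have hg_inv : 0 < (g x)⁻¹ := inv_pos.2 (hg_pos x hx.1)
      simp only [hax]
      nlinarith [mul_pos (sub_pos.2 hk) (pow_pos hg_inv 2)])
  exact neg_le_neg_iff.1 (hcomp ⟨hr, le_rfl⟩)

/-- Riccati-type lower bound (parabolic case): if `a` is continuous on `[r₁, ∞)` with
`a r₁ > 0` and satisfies `a t - a s ≥ -(1/2) ∫ₛᵗ a(u)² du`, then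
`a r ≥ 2 / (r - r₁ + 2 / a r₁)` for all `r ≥ r₁`. -/
theorem riccati_lower_bound_parabolic (r₁ : ℝ) (a : ℝ → ℝ)
    (ha_cont : ContinuousOn a (Set.Ici r₁))
    (ha_pos : 0 < a r₁)
    (ha_int : ∀ s t : ℝ, r₁ ≤ s → s ≤ t →
      a t - a s ≥ -(1/2) * ∫ u in s..t, (a u)^2) :
    ∀ r ∈ Set.Ici r₁, a r ≥ 2 / (r - r₁ + 2 / a r₁) := by
  intro r (hr : r₁ ≤ r)
  have hden : 0 < 1 / a r₁ + 1 / 2 * (r - r₁) := by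
    have : 0 ≤ 1 / 2 * (r - r₁) := by linarith
    positivity
  have hlim : Tendsto (fun k => (1 / a r₁ + k * (r - r₁))⁻¹) (𝓝[>] (1 / 2))
      (𝓝 (1 / a r₁ + 1 / 2 * (r - r₁))⁻¹) :=
    (ContinuousAt.inv₀ (f := fun k => 1 / a r₁ + k * (r - r₁)) (by fun_prop)
      hden.ne').tendsto.mono_left nhdsWithin_le_nhds
  calc 2 / (r - r₁ + 2 / a r₁) = (1 / a r₁ + 1 / 2 * (r - r₁))⁻¹ := by field_simp; ring
    _ ≤ a r := le_of_tendsto hlim (eventually_mem_nhdsWithin.mono fun k (hk : 1 / 2 < k) =>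
        riccati_lower_bound_of_half_lt ha_cont ha_pos ha_int hk hr)
end

section
/- Quadratic growth from the Riccati integral inequality (parabolic case): let r₁ ∈ ℝ and let A : [r₁,∞) → ℝ be continuously differentiable with A(r) > 0 for all r ≥ r₁ and A'(r₁) > 0. Suppose the logarithmic derivative a(r) := A'(r)/A(r) satisfies a(t) − a(s) ≥ −(1/2) ∫ₛᵗ a(u)² du for all r₁ ≤ s ≤ t. Then A(r) ≥ A(r₁) · (1 + (A'(r₁)/(2 A(r₁)))(r − r₁))² for all r ≥ r₁; in particular there exist c > 0 and R ≥ r₁ such that A(r) ≥ c r² for all r ≥ R. -/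
/-!
The logarithmic derivative `a = A'/A` is, in integral form, a supersolution of the Riccati
equation `b' = -b²/2`, whose solution with `b r₁ = a r₁` is `a r₁ / (1 + a r₁ / 2 * (r - r₁))`.
For `0 < α < a r₁` the barrier `α / (1 + a r₁ / 2 * (r - r₁))` is a strict subsolution, so the
comparison principle for right Dini derivatives keeps `a` above it; letting `α → a r₁` gives
`a ≥ b`. Since `b` is the logarithmic derivative of `(1 + a r₁ / 2 * (r - r₁))²`, the ratio of
`A` to this square is nondecreasing, which is the quadratic lower bound.
-/

open Set Filter Topology

lemma one_add_mul_sub_pos {k r₁ r : ℝ} (hk : 0 ≤ k) (hr : r₁ ≤ r) : 0 < 1 + k * (r - r₁) := by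
  have : 0 ≤ k * (r - r₁) := mul_nonneg hk (sub_nonneg.2 hr)
  linarith

lemma frequently_slope_neg_lt_of_sub_ge_neg_integral {a : ℝ → ℝ} {x r : ℝ}
    (ha : ContinuousOn a (Ici x))
    (hineq : ∀ t ≥ x, a t - a x ≥ -(1/2) * ∫ u in x..t, a u ^ 2) (hr : a x ^ 2 / 2 < r) :
    ∃ᶠ z in 𝓝[>] x, slope (fun z => -a z) x z < r := by
  have hsq : ContinuousOn (fun u => a u ^ 2) (Ici x) := ha.pow 2
  have hF : HasDerivWithinAt (fun t => (1/2) * ∫ u in x..t, a u ^ 2) ((1/2) * a x ^ 2)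
      (Ici x) x :=
    (intervalIntegral.integral_hasDerivWithinAt_right (t := Ioi x) IntervalIntegrable.refl
      ((hsq.stronglyMeasurableAtFilter_nhdsWithin measurableSet_Ici x).filter_mono
        (nhdsWithin_mono _ Ioi_subset_Ici_self))
      ((hsq x self_mem_Ici).mono Ioi_subset_Ici_self)).const_mul (1/2)
  refine (hF.liminf_right_slope_le (r := r) (by linarith)).mp ?_
  filter_upwards [self_mem_nhdsWithin] with z (hz : x < z) hlt
  refine lt_of_le_of_lt ?_ hlt
  rw [slope_def_field, slope_def_field, intervalIntegral.integral_same, mul_zero]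
  exact div_le_div_of_nonneg_right (by linarith [hineq z hz.le]) (by linarith)

lemma riccati_comparison_of_lt {a : ℝ → ℝ} {r₁ α t : ℝ} (ha : ContinuousOn a (Ici r₁))
    (hineq : ∀ s t, r₁ ≤ s → s ≤ t → a t - a s ≥ -(1/2) * ∫ u in s..t, a u ^ 2)
    (hα : 0 < α) (hαa : α < a r₁) (ht : r₁ ≤ t) :
    α / (1 + a r₁ / 2 * (t - r₁)) ≤ a t := by
  set D : ℝ → ℝ := fun x => 1 + a r₁ / 2 * (x - r₁) with hD_def
  have hD : ∀ x ≥ r₁, 0 < D x := fun x hx => one_add_mul_sub_pos (by linarith) hx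
  have hB : ∀ x ≥ r₁, HasDerivAt (fun x => -(α / D x)) (α * a r₁ / (2 * D x ^ 2)) x := by
    intro x hx
    have hDx : HasDerivAt D (a r₁ / 2) x :=
      ((((hasDerivAt_id x).sub_const r₁).const_mul (a r₁ / 2)).const_add 1).congr_deriv
        (mul_one _)
    exact ((hasDerivAt_const x α).div hDx (hD x hx).ne').neg.congr_deriv (by field_simp; ring)
  have hstrict : ∀ x ≥ r₁, a x = α / D x → a x ^ 2 / 2 < α * a r₁ / (2 * D x ^ 2) := by
    intro x hx hax
    have hDx := hD x hx
    rw [hax, div_pow, div_div, mul_comm (D x ^ 2)]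
    gcongr
    rw [sq]
    exact mul_lt_mul_of_pos_left hαa hα
  have key := image_le_of_liminf_slope_right_lt_deriv_boundary' (f := fun x => -a x)
    (f' := fun x => a x ^ 2 / 2) (a := r₁) (b := t)
    (ha.mono Icc_subset_Ici_self).neg
    (fun x hx r hr => frequently_slope_neg_lt_of_sub_ge_neg_integral
      (ha.mono (Ici_subset_Ici.2 hx.1)) (fun t ht => hineq x t hx.1 ht) hr)
    (by simp [hD_def]; linarith)
    (fun x hx => (hB x hx.1).continuousAt.continuousWithinAt)
    (fun x hx => (hB x hx.1).hasDerivWithinAt)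
    (fun x hx hax => hstrict x hx.1 (neg_inj.1 hax))
    (right_mem_Icc.2 ht)
  linarith

lemma riccati_comparison {a : ℝ → ℝ} {r₁ t : ℝ} (ha : ContinuousOn a (Ici r₁))
    (hineq : ∀ s t, r₁ ≤ s → s ≤ t → a t - a s ≥ -(1/2) * ∫ u in s..t, a u ^ 2)
    (ha₁ : 0 < a r₁) (ht : r₁ ≤ t) :
    a r₁ / (1 + a r₁ / 2 * (t - r₁)) ≤ a t := by
  have hD : 0 < 1 + a r₁ / 2 * (t - r₁) := one_add_mul_sub_pos (by linarith) ht
  rw [div_le_iff₀ hD]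
  refine le_of_forall_lt_imp_le_of_dense fun α hα => ?_
  have hα' : max α (a r₁ / 2) < a r₁ := max_lt hα (by linarith)
  have := riccati_comparison_of_lt ha hineq (by positivity) hα' ht
  rw [div_le_iff₀ hD] at this
  exact (le_max_left _ _).trans this

lemma monotoneOn_div_of_logDeriv_le {f g f' g' : ℝ → ℝ} {s : Set ℝ} (hs : Convex ℝ s)
    (hf : ∀ x ∈ s, HasDerivWithinAt f (f' x) s x) (hg : ∀ x ∈ s, HasDerivWithinAt g (g' x) s x)
    (hf₀ : ∀ x ∈ s, 0 < f x) (hg₀ : ∀ x ∈ s, 0 < g x)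
    (hlog : ∀ x ∈ interior s, g' x / g x ≤ f' x / f x) :
    MonotoneOn (fun x => f x / g x) s := by
  refine monotoneOn_of_hasDerivWithinAt_nonneg hs
    (fun x hx => (hf x hx).continuousWithinAt.div (hg x hx).continuousWithinAt (hg₀ x hx).ne')
    (fun x hx => ((hf x (interior_subset hx)).div (hg x (interior_subset hx))
      (hg₀ x (interior_subset hx)).ne').mono interior_subset) fun x hx => ?_
  have hfx := hf₀ x (interior_subset hx)
  have hgx := hg₀ x (interior_subset hx)
  have := hlog x hx
  rw [div_le_div_iff₀ hgx hfx] at this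
  apply div_nonneg _ (by positivity)
  linarith

lemma exists_mul_sq_le_of_mul_sq_le {f : ℝ → ℝ} {C k r₁ : ℝ} (hC : 0 < C) (hk : 0 < k)
    (h : ∀ r ≥ r₁, C * (1 + k * (r - r₁)) ^ 2 ≤ f r) :
    ∃ c > 0, ∃ R ≥ r₁, ∀ r ≥ R, c * r ^ 2 ≤ f r := by
  refine ⟨C * (k / 2) ^ 2, by positivity, max r₁ (2 * |r₁|), le_max_left _ _, fun r hr => ?_⟩
  have hr₁ : r₁ ≤ r := (le_max_left _ _).trans hr
  have hr₂ : 2 * |r₁| ≤ r := (le_max_right _ _).trans hr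
  have hkr : 0 ≤ k / 2 * r := mul_nonneg (by positivity) ((by positivity : 0 ≤ 2 * |r₁|).trans hr₂)
  have hlin : k / 2 * r ≤ 1 + k * (r - r₁) := by
    nlinarith [le_abs_self r₁]
  calc C * (k / 2) ^ 2 * r ^ 2 = C * (k / 2 * r) ^ 2 := by ring
    _ ≤ C * (1 + k * (r - r₁)) ^ 2 := by gcongr
    _ ≤ f r := h r hr₁

lemma mul_sq_le_of_div_le_logDeriv {A A' : ℝ → ℝ} {r₁ a₁ : ℝ} (ha₁ : 0 ≤ a₁)
    (hA_deriv : ∀ r ∈ Ici r₁, HasDerivWithinAt A (A' r) (Ici r₁) r)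
    (hA_pos : ∀ r ∈ Ici r₁, 0 < A r)
    (hlog : ∀ r > r₁, a₁ / (1 + a₁ / 2 * (r - r₁)) ≤ A' r / A r) {r : ℝ} (hr : r₁ ≤ r) :
    A r₁ * (1 + a₁ / 2 * (r - r₁)) ^ 2 ≤ A r := by
  have hD : ∀ r ∈ Ici r₁, 0 < 1 + a₁ / 2 * (r - r₁) := fun r hr =>
    one_add_mul_sub_pos (by positivity) hr
  have hsq : ∀ r ∈ Ici r₁, HasDerivWithinAt (fun r => (1 + a₁ / 2 * (r - r₁)) ^ 2)
      (2 * (1 + a₁ / 2 * (r - r₁)) * (a₁ / 2)) (Ici r₁) r := fun r _ =>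
    ((((hasDerivAt_id r).sub_const r₁).const_mul (a₁ / 2)).const_add 1).pow 2 |>.hasDerivWithinAt
      |>.congr_deriv (by simp)
  have hmono := monotoneOn_div_of_logDeriv_le (convex_Ici r₁) hA_deriv hsq hA_pos
    (fun r hr => pow_pos (hD r hr) 2) fun r hr => by
      rw [interior_Ici] at hr
      have := hD r (Ioi_subset_Ici_self hr)
      convert hlog r hr using 1
      field_simp
  have := hmono self_mem_Ici hr hr
  simp only [sub_self, mul_zero, add_zero, one_pow, div_one] at this
  rwa [le_div_iff₀ (pow_pos (hD r hr) 2)] at this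

/-- Quadratic growth from the Riccati integral inequality (parabolic case): if `A` is `C¹`
and positive on `[r₁, ∞)` with `A' r₁ > 0`, and its logarithmic derivative
`a := A'/A` satisfies `a t - a s ≥ -(1/2)∫ₛᵗ a(u)² du`, then
`A r ≥ A r₁ (1 + (A' r₁/(2 A r₁))(r - r₁))²` for all `r ≥ r₁`; in particular `A` grows at
least quadratically. -/
theorem quadratic_growth_parabolic (r₁ : ℝ) (A A' : ℝ → ℝ)
    (hA_deriv : ∀ r ∈ Set.Ici r₁, HasDerivWithinAt A (A' r) (Set.Ici r₁) r)
    (hA'_cont : ContinuousOn A' (Set.Ici r₁))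
    (hA_pos : ∀ r ∈ Set.Ici r₁, 0 < A r)
    (hA'_pos : 0 < A' r₁)
    (ha_int : ∀ s t : ℝ, r₁ ≤ s → s ≤ t →
      (A' t / A t) - (A' s / A s) ≥ -(1/2) * ∫ u in s..t, (A' u / A u)^2) :
    (∀ r ∈ Set.Ici r₁,
        A r ≥ A r₁ * (1 + (A' r₁ / (2 * A r₁)) * (r - r₁))^2) ∧
      ∃ c > 0, ∃ R ≥ r₁, ∀ r ≥ R, A r ≥ c * r^2 := by
  have hA₁ : 0 < A r₁ := hA_pos r₁ self_mem_Ici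
  have ha₁ : 0 < A' r₁ / A r₁ := div_pos hA'_pos hA₁
  have ha_cont : ContinuousOn (fun u => A' u / A u) (Ici r₁) :=
    hA'_cont.div (fun r hr => (hA_deriv r hr).continuousWithinAt) fun r hr => (hA_pos r hr).ne'
  have hquad : ∀ r ∈ Ici r₁, A r₁ * (1 + A' r₁ / A r₁ / 2 * (r - r₁)) ^ 2 ≤ A r :=
    fun r hr => mul_sq_le_of_div_le_logDeriv ha₁.le hA_deriv hA_pos
      (fun t ht => riccati_comparison ha_cont ha_int ha₁ ht.le) hr
  rw [show A' r₁ / (2 * A r₁) = A' r₁ / A r₁ / 2 by rw [mul_comm, ← div_div]]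
  exact ⟨hquad, exists_mul_sq_le_of_mul_sq_le hA₁ (half_pos ha₁) hquad⟩
end

section
/- Let r₀ > 0, C > 0, and let A : [r₀,∞) → ℝ be twice differentiable with A(r) > 0, with 2 A(r) A''(r) ≥ (A'(r))² for all r ≥ r₀, and with the linear upper bound A(r) ≤ C r for all r ≥ r₀. Then A'(r) ≤ 0 for all r ≥ r₀. -/
/-!
The hypothesis `2 A A'' ≥ (A')²` says exactly that `√A` is convex: its second derivative is
`(2 A A'' - A'²) / (4 A √A)`. A convex function lies above its tangent lines, so if `√A` had a
positive slope somewhere it would grow linearly and `A` quadratically, contradicting `A r ≤ C r`.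
Hence `(√A)' = A' / (2 √A) ≤ 0`.
-/

open Set

theorem monotoneOn_Ici_of_hasDerivWithinAt_nonneg {b : ℝ} {f f' : ℝ → ℝ}
    (hf : ∀ x ∈ Ici b, HasDerivWithinAt f (f' x) (Ici b) x) (hf' : ∀ x ∈ Ici b, 0 ≤ f' x) :
    MonotoneOn f (Ici b) :=
  monotoneOn_of_hasDerivWithinAt_nonneg (convex_Ici b)
    (fun x hx ↦ (hf x hx).continuousWithinAt)
    (fun x hx ↦ by
      rw [interior_Ici] at hx ⊢
      exact (hf x (mem_Ici_of_Ioi hx)).mono Ioi_subset_Ici_self)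
    (fun x hx ↦ hf' x (interior_subset hx))

theorem add_mul_sub_le_of_monotoneOn_deriv {b : ℝ} {f f' : ℝ → ℝ}
    (hf : ∀ x ∈ Ici b, HasDerivWithinAt f (f' x) (Ici b) x) (hf' : MonotoneOn f' (Ici b))
    {a : ℝ} (ha : a ∈ Ici b) {x : ℝ} (hax : a ≤ x) :
    f a + f' a * (x - a) ≤ f x := by
  have hsub : Ici a ⊆ Ici b := Ici_subset_Ici.mpr ha
  have hmono : MonotoneOn (fun y ↦ f y - y * f' a) (Ici a) :=
    monotoneOn_Ici_of_hasDerivWithinAt_nonneg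
      (fun y hy ↦ ((hf y (hsub hy)).mono hsub).sub (hasDerivAt_mul_const (f' a)).hasDerivWithinAt)
      (fun y hy ↦ sub_nonneg.mpr (hf' ha (hsub hy) hy))
  linarith [hmono self_mem_Ici hax hax]

theorem exists_add_mul_lt_sq {d : ℝ} (hd : d ≠ 0) (p q : ℝ) :
    ∃ t ≥ 0, p + q * t < (d * t) ^ 2 := by
  have hd2 : 0 < d ^ 2 := by positivity
  set t := (|p| + |q|) / d ^ 2 + 1 with ht_def
  have ht1 : 1 ≤ t := le_add_of_nonneg_left (by positivity)
  have ht : d ^ 2 * t = |p| + |q| + d ^ 2 := by rw [ht_def]; field_simp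
  refine ⟨t, by linarith, ?_⟩
  calc p + q * t ≤ |p| * t + |q| * t :=
        add_le_add ((le_abs_self p).trans (le_mul_of_one_le_right (abs_nonneg p) ht1))
          (mul_le_mul_of_nonneg_right (le_abs_self q) (by linarith))
    _ < (|p| + |q| + d ^ 2) * t := by nlinarith
    _ = (d * t) ^ 2 := by rw [← ht]; ring

theorem nonpos_of_monotoneOn_deriv_of_sq_le {b C : ℝ} {f f' : ℝ → ℝ}
    (hf : ∀ x ∈ Ici b, HasDerivWithinAt f (f' x) (Ici b) x) (hf' : MonotoneOn f' (Ici b))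
    (hf_nonneg : ∀ x ∈ Ici b, 0 ≤ f x) (h_sq : ∀ x ∈ Ici b, f x ^ 2 ≤ C * x) :
    ∀ x ∈ Ici b, f' x ≤ 0 := by
  intro a ha
  by_contra! hpos
  obtain ⟨t, ht, hlt⟩ := exists_add_mul_lt_sq hpos.ne' (C * a) C
  have hat : a ≤ a + t := le_add_of_nonneg_right ht
  have htangent := add_mul_sub_le_of_monotoneOn_deriv hf hf' ha hat
  rw [add_sub_cancel_left] at htangent
  have hfa := hf_nonneg a ha
  have : C * a + C * t < C * (a + t) := calc
    C * a + C * t < (f' a * t) ^ 2 := hlt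
    _ ≤ f (a + t) ^ 2 := pow_le_pow_left₀ (by positivity) (by linarith) 2
    _ ≤ C * (a + t) := h_sq (a + t) (ha.trans hat)
  linarith

theorem HasDerivWithinAt.sqrt_deriv {A A' : ℝ → ℝ} {a'' : ℝ} {s : Set ℝ} {x : ℝ}
    (hA' : HasDerivWithinAt A' a'' s x) (hA : HasDerivWithinAt A (A' x) s x) (hx : 0 < A x) :
    HasDerivWithinAt (fun y ↦ A' y / (2 * √(A y)))
      ((2 * A x * a'' - A' x ^ 2) / (4 * A x * √(A x))) s x := by
  have hsqrt : 0 < √(A x) := Real.sqrt_pos.mpr hx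
  refine (hA'.div ((hA.sqrt hx.ne').const_mul 2) (by positivity)).congr_deriv ?_
  field_simp
  rw [Real.sq_sqrt hx.le]
  ring

theorem deriv_nonpos_of_linear_bound_general (r₀ C : ℝ)
    (A A' A'' : ℝ → ℝ)
    (hA_deriv : ∀ r ∈ Set.Ici r₀, HasDerivWithinAt A (A' r) (Set.Ici r₀) r)
    (hA'_deriv : ∀ r ∈ Set.Ici r₀, HasDerivWithinAt A' (A'' r) (Set.Ici r₀) r)
    (hA_pos : ∀ r ∈ Set.Ici r₀, 0 < A r)
    (h_ineq : ∀ r ∈ Set.Ici r₀, 2 * A r * A'' r ≥ (A' r)^2)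
    (h_lin : ∀ r ∈ Set.Ici r₀, A r ≤ C * r) :
    ∀ r ∈ Set.Ici r₀, A' r ≤ 0 := by
  have hsqrt_deriv : ∀ r ∈ Ici r₀,
      HasDerivWithinAt (fun y ↦ √(A y)) (A' r / (2 * √(A r))) (Ici r₀) r :=
    fun r hr ↦ (hA_deriv r hr).sqrt (hA_pos r hr).ne'
  have hsqrt_deriv_mono : MonotoneOn (fun r ↦ A' r / (2 * √(A r))) (Ici r₀) :=
    monotoneOn_Ici_of_hasDerivWithinAt_nonneg
      (fun r hr ↦ (hA'_deriv r hr).sqrt_deriv (hA_deriv r hr) (hA_pos r hr))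
      (fun r hr ↦ by
        have := hA_pos r hr
        exact div_nonneg (sub_nonneg.mpr (h_ineq r hr)) (by positivity))
  have hsqrt_deriv_nonpos := nonpos_of_monotoneOn_deriv_of_sq_le hsqrt_deriv hsqrt_deriv_mono
    (fun r _ ↦ Real.sqrt_nonneg _)
    (fun r hr ↦ (Real.sq_sqrt (hA_pos r hr).le).trans_le (h_lin r hr))
  intro r hr
  have hden : 0 < 2 * √(A r) := by have := Real.sqrt_pos.mpr (hA_pos r hr); positivity
  simpa using (div_le_iff₀ hden).mp (hsqrt_deriv_nonpos r hr)

/-- If `A` is twice differentiable and positive on `[r₀, ∞)` (with `r₀ > 0`), satisfies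
`2 A A'' ≥ (A')²`, and is bounded above by a linear function `C r`, then `A' ≤ 0` on
`[r₀, ∞)`. -/
theorem deriv_nonpos_of_linear_bound (r₀ C : ℝ) (hr₀ : 0 < r₀) (hC : 0 < C)
    (A A' A'' : ℝ → ℝ)
    (hA_deriv : ∀ r ∈ Set.Ici r₀, HasDerivWithinAt A (A' r) (Set.Ici r₀) r)
    (hA'_deriv : ∀ r ∈ Set.Ici r₀, HasDerivWithinAt A' (A'' r) (Set.Ici r₀) r)
    (hA_pos : ∀ r ∈ Set.Ici r₀, 0 < A r)
    (h_ineq : ∀ r ∈ Set.Ici r₀, 2 * A r * A'' r ≥ (A' r)^2)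
    (h_lin : ∀ r ∈ Set.Ici r₀, A r ≤ C * r) :
    ∀ r ∈ Set.Ici r₀, A' r ≤ 0 :=
  deriv_nonpos_of_linear_bound_general r₀ C A A' A'' hA_deriv hA'_deriv hA_pos h_ineq h_lin
end

section
/- Comparison estimate on logarithmic scales (nonparabolic case): let 0 < r₁ ≤ r₂ and let a : [r₁,r₂] → ℝ be continuous with 0 ≤ a(r) ≤ 2 for all r ∈ [r₁,r₂], satisfying a(t) − a(s) ≥ ∫ₛᵗ (1 − a(u)²/4) · (du/u) for all r₁ ≤ s ≤ t ≤ r₂. Then a(r₂) ≥ 2 + √(r₁/r₂) · (a(r₁) − 2). -/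
/-!
Put `b := 2 - a ∈ [0, 2]`. Since `1 - a²/4 = (b/2)(2 - b/2) ≥ b/2`, the hypothesis gives
`b t - b s ≤ -∫ₛᵗ b(u)/(2u) du`, an integral form of `b' ≤ -b/(2u)`. With the integrating
factor `√u`, whose logarithmic derivative is `1/(2u)`, this says that `√u · b(u)` is
nonincreasing, so `√r₂ (2 - a r₂) ≤ √r₁ (2 - a r₁)`.
-/

open Set intervalIntegral

lemma antitoneOn_add_integral {a b : ℝ} {f g : ℝ → ℝ} (hg : ContinuousOn g (Icc a b))
    (h : ∀ s t, a ≤ s → s ≤ t → t ≤ b → f t - f s ≤ -∫ u in s..t, g u) :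
    AntitoneOn (fun t => f t + ∫ u in a..t, g u) (Icc a b) := by
  intro s hs t ht hst
  have hint : ∀ x ∈ Icc a b, ∀ y ∈ Icc a b, IntervalIntegrable g MeasureTheory.volume x y :=
    fun x hx y hy => (hg.mono (uIcc_subset_Icc hx hy)).intervalIntegrable
  have hsplit := integral_add_adjacent_intervals (hint a (left_mem_Icc.2 (hs.1.trans hs.2)) s hs)
    (hint s hs t ht)
  have := h s t hs.1 hst ht.2
  dsimp only
  linarith

/-- Integral form of Grönwall's inequality `f' ≤ -k f`, with an integrating factor `E' = k E`. -/
theorem mul_le_mul_of_sub_le_neg_integral {a b : ℝ} {f k E : ℝ → ℝ} (hab : a ≤ b)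
    (hf : ContinuousOn f (Icc a b)) (hk : ContinuousOn k (Icc a b))
    (hk₀ : ∀ x ∈ Ioo a b, 0 ≤ k x) (hE : ContinuousOn E (Icc a b))
    (hE' : ∀ x ∈ Ioo a b, HasDerivAt E (k x * E x) x) (hE₀ : ∀ x ∈ Icc a b, 0 ≤ E x)
    (h : ∀ s t, a ≤ s → s ≤ t → t ≤ b → f t - f s ≤ -∫ u in s..t, k u * f u) :
    E b * f b ≤ E a * f a := by
  have hg : ContinuousOn (fun u => k u * f u) (Icc a b) := hk.mul hf
  set B : ℝ → ℝ := fun t => ∫ u in a..t, k u * f u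
  have hF : AntitoneOn (fun t => f t + B t) (Icc a b) := antitoneOn_add_integral hg h
  have hB : ContinuousOn B (Icc a b) := by
    have hint : MeasureTheory.IntegrableOn (fun u => k u * f u) (uIcc a b) := by
      simpa only [uIcc_of_le hab] using hg.integrableOn_Icc
    simpa only [uIcc_of_le hab] using continuousOn_primitive_interval hint
  have hB' : ∀ x ∈ Ioo a b, HasDerivAt B (k x * f x) x := fun x hx =>
    integral_hasDerivAt_right ((hg.mono (uIcc_subset_Icc (left_mem_Icc.2 hab)
        (Ioo_subset_Icc_self hx))).intervalIntegrable)
      ((hg.mono Ioo_subset_Icc_self).stronglyMeasurableAtFilter isOpen_Ioo x hx)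
      (hg.continuousAt (Icc_mem_nhds hx.1 hx.2))
  set C := f b + B b
  -- `(E (B - C))' = k E (f + B - C) ≥ 0`, as `f + B` is antitone with final value `C`.
  have hH : MonotoneOn (fun u => E u * (B u - C)) (Icc a b) := by
    refine monotoneOn_of_hasDerivWithinAt_nonneg (f' := fun u => k u * E u * (f u + B u - C))
      (convex_Icc a b) (hE.mul (hB.sub continuousOn_const)) (fun x hx => ?_) (fun x hx => ?_)
    · rw [interior_Icc] at hx
      refine ((hE' x hx).mul ((hB' x hx).sub_const C)).hasDerivWithinAt.congr_deriv ?_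
      ring
    · rw [interior_Icc] at hx
      have hFx : C ≤ f x + B x := hF (Ioo_subset_Icc_self hx) (right_mem_Icc.2 hab) hx.2.le
      exact mul_nonneg (mul_nonneg (hk₀ x hx) (hE₀ x (Ioo_subset_Icc_self hx))) (by linarith)
  have hBa : B a = 0 := integral_same
  have hHab := hH (left_mem_Icc.2 hab) (right_mem_Icc.2 hab) hab
  have hCa : C ≤ f a := by
    simpa only [hBa, add_zero] using hF (left_mem_Icc.2 hab) (right_mem_Icc.2 hab) hab
  calc E b * f b = -(E b * (B b - C)) := by ring
    _ ≤ E a * C := by simp only [hBa] at hHab; linarith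
    _ ≤ E a * f a := mul_le_mul_of_nonneg_left hCa (hE₀ a (left_mem_Icc.2 hab))

lemma sub_div_two_le_one_sub_sq_div_four {x : ℝ} (hx₀ : 0 ≤ x) (hx₂ : x ≤ 2) :
    (2 - x) / 2 ≤ 1 - x ^ 2 / 4 := by
  nlinarith

lemma hasDerivAt_sqrt_one_div_two_mul_mul_sqrt {x : ℝ} (hx : 0 < x) :
    HasDerivAt Real.sqrt (1 / (2 * x) * Real.sqrt x) x := by
  refine (Real.hasDerivAt_sqrt hx.ne').congr_deriv ?_
  have hs : 0 < Real.sqrt x := Real.sqrt_pos.2 hx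
  field_simp
  rw [Real.sq_sqrt hx.le]

lemma continuousOn_one_div_two_mul {s : Set ℝ} (hs : ∀ u ∈ s, u ≠ 0) :
    ContinuousOn (fun u => 1 / (2 * u)) s :=
  continuousOn_const.div (continuousOn_const.mul continuousOn_id) fun u hu =>
    mul_ne_zero two_ne_zero (hs u hu)

lemma two_sub_sub_le_neg_integral {r₁ r₂ : ℝ} (hr₁ : 0 < r₁) {a : ℝ → ℝ}
    (ha_cont : ContinuousOn a (Icc r₁ r₂)) (ha_bounds : ∀ r ∈ Icc r₁ r₂, 0 ≤ a r ∧ a r ≤ 2)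
    {s t : ℝ} (hs : r₁ ≤ s) (hst : s ≤ t) (ht : t ≤ r₂)
    (ha_int : ∫ u in s..t, (1 - (a u)^2 / 4) / u ≤ a t - a s) :
    (2 - a t) - (2 - a s) ≤ -∫ u in s..t, 1 / (2 * u) * (2 - a u) := by
  have hsub : uIcc s t ⊆ Icc r₁ r₂ := (uIcc_of_le hst).symm ▸ Icc_subset_Icc hs ht
  have hpos : ∀ u ∈ Icc r₁ r₂, 0 < u := fun u hu => hr₁.trans_le hu.1
  have hmono : (∫ u in s..t, 1 / (2 * u) * (2 - a u)) ≤ ∫ u in s..t, (1 - (a u)^2 / 4) / u := by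
    refine integral_mono_on hst (((continuousOn_one_div_two_mul fun u hu => (hpos u hu).ne').mul
      (continuousOn_const.sub ha_cont)).mono hsub |>.intervalIntegrable)
      (ContinuousOn.intervalIntegrable ?_) fun u hu => ?_
    · exact ((continuousOn_const.sub ((ha_cont.pow 2).div_const 4)).div continuousOn_id
        fun u hu => (hpos u hu).ne').mono hsub
    · have hu := Icc_subset_Icc hs ht hu
      rw [one_div_mul_eq_div, ← div_div]
      exact div_le_div_of_nonneg_right (sub_div_two_le_one_sub_sq_div_four
        (ha_bounds u hu).1 (ha_bounds u hu).2) (hpos u hu).le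
  linarith

/-- Comparison estimate on logarithmic scales (nonparabolic case): if `a` is continuous
on `[r₁, r₂]` (with `0 < r₁ ≤ r₂`), takes values in `[0, 2]`, and satisfies
`a t - a s ≥ ∫ₛᵗ (1 - a(u)²/4) du/u`, then `a r₂ ≥ 2 + √(r₁/r₂) (a r₁ - 2)`. -/
theorem log_scale_comparison (r₁ r₂ : ℝ) (hr₁ : 0 < r₁) (hr₁₂ : r₁ ≤ r₂) (a : ℝ → ℝ)
    (ha_cont : ContinuousOn a (Set.Icc r₁ r₂))
    (ha_bounds : ∀ r ∈ Set.Icc r₁ r₂, 0 ≤ a r ∧ a r ≤ 2)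
    (ha_int : ∀ s t : ℝ, r₁ ≤ s → s ≤ t → t ≤ r₂ →
      a t - a s ≥ ∫ u in s..t, (1 - (a u)^2 / 4) / u) :
    a r₂ ≥ 2 + Real.sqrt (r₁ / r₂) * (a r₁ - 2) := by
  have hpos : ∀ u ∈ Ioo r₁ r₂, 0 < u := fun u hu => hr₁.trans hu.1
  have key := mul_le_mul_of_sub_le_neg_integral (f := fun u => 2 - a u) hr₁₂
    (continuousOn_const.sub ha_cont)
    (continuousOn_one_div_two_mul fun u hu => (hr₁.trans_le hu.1).ne')
    (fun u hu => by have := hpos u hu; positivity) Real.continuous_sqrt.continuousOn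
    (fun u hu => hasDerivAt_sqrt_one_div_two_mul_mul_sqrt (hpos u hu))
    (fun u _ => Real.sqrt_nonneg u)
    (fun s t hs hst ht => two_sub_sub_le_neg_integral hr₁ ha_cont ha_bounds hs hst ht
      (ha_int s t hs hst ht))
  have hs₂ : 0 < Real.sqrt r₂ := Real.sqrt_pos.2 (hr₁.trans_le hr₁₂)
  rw [ge_iff_le, Real.sqrt_div hr₁.le, div_mul_eq_mul_div, ← le_sub_iff_add_le',
    div_le_iff₀ hs₂]
  linarith
end

section
/- Let r₀ > 0 and let a : [r₀,∞) → ℝ be continuous with a(r) ≥ 0 for all r ≥ r₀, satisfying a(t) − a(s) ≥ ∫ₛᵗ (1 − a(u)²/4) · (du/u) for all r₀ ≤ s ≤ t. Set c := max(0, (2 − a(r₀)) · √(r₀)). Then a(r) ≥ 2 − c/√r for all r ≥ r₀. -/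
/-!
With `c` as in the statement, `b u = 2 - c / √u` is a subsolution of `a' = (1 - a² / 4) / u`:
`b' = c / (2 u √u)`, and `c / (2 √u) ≤ 1 - b² / 4` as long as `c ≤ 2 √u`, which holds for
`u ≥ r₀` because `a r₀ ≥ 0` forces `c ≤ 2 √r₀`. Since `1 - x² / 4` decreases for `x ≥ 0`,
on any interval where `0 ≤ a < b` the hypothesis gives `a t - a s ≥ b t - b s`. As
`b r₀ ≤ a r₀` by the choice of `c`, a continuous induction shows that `a - b` never becomes
negative.
-/

open Set Real intervalIntegral

theorem nonneg_of_le_of_neg_on_Ioo {α : Type*} [ConditionallyCompleteLinearOrder α]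
    [TopologicalSpace α] [OrderTopology α] {f : α → ℝ} {a b : α} (hab : a ≤ b)
    (hf : ContinuousOn f (Icc a b)) (ha : 0 ≤ f a)
    (hstep : ∀ s, a ≤ s → s < b → (∀ u ∈ Ioo s b, f u < 0) → f s ≤ f b) :
    0 ≤ f b := by
  have hclosed : IsClosed ({x | 0 ≤ f x} ∩ Icc a b) := by
    rw [inter_comm]
    exact hf.preimage_isClosed_of_isClosed isClosed_Icc isClosed_Ici
  refine hclosed.mem_of_ge_of_forall_exists_gt ha hab ?_
  rintro x ⟨hfx : 0 ≤ f x, hax, hxb⟩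
  by_contra hempty
  have hneg : ∀ u ∈ Ioc x b, f u < 0 := fun u hu => not_le.1 fun h => hempty ⟨u, h, hu⟩
  linarith [hstep x hax hxb fun u hu => hneg u (Ioo_subset_Ioc_self hu), hneg b ⟨hxb, le_rfl⟩]

theorem hasDerivAt_neg_div_sqrt (c : ℝ) {u : ℝ} (hu : 0 < u) :
    HasDerivAt (fun u => -c / √u) (c / (2 * u * √u)) u := by
  have hq : 0 < √u := sqrt_pos.2 hu
  refine ((hasDerivAt_const u (-c)).div (hasDerivAt_sqrt hu.ne') hq.ne').congr_deriv ?_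
  rw [sq_sqrt hu.le]
  field_simp
  ring

theorem intervalIntegrable_div_mul_sqrt (c : ℝ) {s t : ℝ} (hs : 0 < s) (ht : 0 < t) :
    IntervalIntegrable (fun u => c / (2 * u * √u)) MeasureTheory.volume s t := by
  refine ContinuousOn.intervalIntegrable fun u hu => ?_
  have : 0 < u := (lt_min hs ht).trans_le hu.1
  fun_prop (disch := positivity)

theorem integral_div_mul_sqrt (c : ℝ) {s t : ℝ} (hs : 0 < s) (ht : 0 < t) :
    ∫ u in s..t, c / (2 * u * √u) = c / √s - c / √t := by
  have hpos : ∀ u ∈ uIcc s t, 0 < u := fun u hu => (lt_min hs ht).trans_le hu.1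
  rw [integral_eq_sub_of_hasDerivAt (fun u hu => hasDerivAt_neg_div_sqrt c (hpos u hu))
    (intervalIntegrable_div_mul_sqrt c hs ht)]
  ring

theorem div_two_mul_sqrt_le {c u x : ℝ} (hu : 0 < u) (hc : 0 ≤ c) (hcu : c ≤ 2 * √u)
    (hx : 0 ≤ x) (hxu : x ≤ 2 - c / √u) :
    c / (2 * u * √u) ≤ (1 - x ^ 2 / 4) / u := by
  have hq : 0 < √u := sqrt_pos.2 hu
  set d := c / √u with hd
  have hd0 : 0 ≤ d := div_nonneg hc hq.le
  have hd2 : d ≤ 2 := (div_le_iff₀ hq).2 (by linarith)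
  have hsq : x ^ 2 ≤ (2 - d) ^ 2 := pow_le_pow_left₀ hx hxu 2
  calc c / (2 * u * √u) = d / 2 / u := by rw [hd]; field_simp
    _ ≤ (1 - x ^ 2 / 4) / u := by gcongr; nlinarith

theorem sub_div_sqrt_le_integral_of_le_two_sub_div_sqrt {a : ℝ → ℝ} {c s t : ℝ} (hs : 0 < s)
    (hst : s ≤ t) (hc : 0 ≤ c) (hcs : c ≤ 2 * √s) (ha_cont : ContinuousOn a (Icc s t))
    (ha : ∀ u ∈ Ioo s t, 0 ≤ a u ∧ a u ≤ 2 - c / √u) :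
    c / √s - c / √t ≤ ∫ u in s..t, (1 - a u ^ 2 / 4) / u := by
  have ht : 0 < t := hs.trans_le hst
  rw [← integral_div_mul_sqrt c hs ht]
  refine integral_mono_on_of_le_Ioo hst (intervalIntegrable_div_mul_sqrt c hs ht) ?_
    fun u hu => ?_
  · refine ContinuousOn.intervalIntegrable ?_
    rw [uIcc_of_le hst]
    exact ContinuousOn.div (by fun_prop) continuousOn_id fun u hu => (hs.trans_le hu.1).ne'
  · have hcu : c ≤ 2 * √u := hcs.trans (by gcongr; exact hu.1.le)
    exact div_two_mul_sqrt_le (hs.trans hu.1) hc hcu (ha u hu).1 (ha u hu).2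

/-- If `a` is continuous and nonnegative on `[r₀, ∞)` (with `r₀ > 0`) and satisfies
`a t - a s ≥ ∫ₛᵗ (1 - a(u)²/4) du/u`, then with `c := max 0 ((2 - a r₀) √r₀)` one has
`a r ≥ 2 - c/√r` for all `r ≥ r₀`. -/
theorem log_scale_lower_bound (r₀ : ℝ) (hr₀ : 0 < r₀) (a : ℝ → ℝ)
    (ha_cont : ContinuousOn a (Set.Ici r₀))
    (ha_nonneg : ∀ r ∈ Set.Ici r₀, 0 ≤ a r)
    (ha_int : ∀ s t : ℝ, r₀ ≤ s → s ≤ t →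
      a t - a s ≥ ∫ u in s..t, (1 - (a u)^2 / 4) / u) :
    ∀ r ∈ Set.Ici r₀,
      a r ≥ 2 - max 0 ((2 - a r₀) * Real.sqrt r₀) / Real.sqrt r := by
  intro r hr
  set c := max 0 ((2 - a r₀) * √r₀)
  have hq₀ : 0 < √r₀ := sqrt_pos.2 hr₀
  have hc : c ≤ 2 * √r₀ :=
    max_le (by positivity) (by nlinarith [ha_nonneg r₀ (mem_Ici.2 le_rfl)])
  have hc_start : 2 - a r₀ ≤ c / √r₀ := (le_div_iff₀ hq₀).2 (le_max_right _ _)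
  suffices 0 ≤ a r - (2 - c / √r) by linarith
  refine nonneg_of_le_of_neg_on_Ioo (f := fun u => a u - (2 - c / √u)) hr ?_
    (by linarith) fun s hs hsr hneg => ?_
  · refine (ha_cont.mono Icc_subset_Ici_self).sub (continuousOn_const.sub ?_)
    exact continuousOn_const.div continuous_sqrt.continuousOn
      fun u hu => (sqrt_pos.2 (hr₀.trans_le hu.1)).ne'
  · have hsub : Icc s r ⊆ Ici r₀ := Icc_subset_Ici_self.trans (Ici_subset_Ici.2 hs)
    have hb := sub_div_sqrt_le_integral_of_le_two_sub_div_sqrt (hr₀.trans_le hs) hsr.le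
      (le_max_left _ _) (hc.trans (by gcongr)) (ha_cont.mono hsub)
      fun u hu => ⟨ha_nonneg u (hsub (Ioo_subset_Icc_self hu)), by linarith [hneg u hu]⟩
    linarith [ha_int s r hs hsr.le]
end

section
/- Let r₀ > 0, c ≥ 0, and let A : [r₀,∞) → ℝ be differentiable with A(r) > 0 for all r ≥ r₀ and r · A'(r) ≥ (2 − c/√r) · A(r) for all r ≥ r₀. Then A(r) ≥ A(r₀) · (r/r₀)² · exp(−2c/√(r₀)) for all r ≥ r₀. -/
/-!
The comparison function `φ r = r² exp (2c/√r)` solves the equality case `r φ' = (2 - c/√r) φ`,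
so the hypothesis says exactly that `A / φ` is nondecreasing on `[r₀, ∞)`. Hence
`A r ≥ A r₀ (r/r₀)² exp (2c/√r - 2c/√r₀)`, and `exp (2c/√r) ≥ 1` since `c ≥ 0`.
-/

open Real Set

lemma monotoneOn_div_of_mul_deriv_le {D : Set ℝ} (hD : Convex ℝ D) {f f' g g' : ℝ → ℝ}
    (hf : ∀ x ∈ D, HasDerivWithinAt f (f' x) D x) (hg : ∀ x ∈ D, HasDerivWithinAt g (g' x) D x)
    (hg₀ : ∀ x ∈ D, g x ≠ 0) (h : ∀ x ∈ interior D, f x * g' x ≤ f' x * g x) :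
    MonotoneOn (fun x => f x / g x) D := by
  have hderiv : ∀ x ∈ D, HasDerivWithinAt (fun x => f x / g x)
      ((f' x * g x - f x * g' x) / g x ^ 2) D x := fun x hx => (hf x hx).div (hg x hx) (hg₀ x hx)
  refine monotoneOn_of_hasDerivWithinAt_nonneg hD (fun x hx => (hderiv x hx).continuousWithinAt)
    (fun x hx => (hderiv x (interior_subset hx)).mono interior_subset) fun x hx => ?_
  exact div_nonneg (sub_nonneg.2 (h x hx)) (sq_nonneg _)

lemma hasDerivAt_sq_mul_exp_div_sqrt (c : ℝ) {x : ℝ} (hx : 0 < x) :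
    HasDerivAt (fun x => x ^ 2 * exp (2 * c / √x))
      (x ^ 2 * exp (2 * c / √x) * ((2 - c / √x) / x)) x := by
  have hs : √x ≠ 0 := (sqrt_pos.2 hx).ne'
  refine ((hasDerivAt_pow 2 x).fun_mul
    (((hasDerivAt_const x (2 * c)).fun_div (hasDerivAt_sqrt hx.ne') hs).exp)).congr_deriv ?_
  have hsq : √x ^ 2 = x := sq_sqrt hx.le
  field_simp
  push_cast
  linear_combination c * x * hsq

/-- If `A > 0` is differentiable on `[r₀, ∞)` (with `r₀ > 0`) and satisfies
`r A' r ≥ (2 - c/√r) A r` with `c ≥ 0`, then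
`A r ≥ A r₀ (r/r₀)² exp(-2c/√r₀)` for all `r ≥ r₀`. -/
theorem growth_from_log_scale_derivative_bound (r₀ c : ℝ) (hr₀ : 0 < r₀) (hc : 0 ≤ c)
    (A A' : ℝ → ℝ)
    (hA_deriv : ∀ r ∈ Set.Ici r₀, HasDerivWithinAt A (A' r) (Set.Ici r₀) r)
    (hA_pos : ∀ r ∈ Set.Ici r₀, 0 < A r)
    (hA'_ge : ∀ r ∈ Set.Ici r₀, r * A' r ≥ (2 - c / Real.sqrt r) * A r) :
    ∀ r ∈ Set.Ici r₀,
      A r ≥ A r₀ * (r / r₀)^2 * Real.exp (-2 * c / Real.sqrt r₀) := by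
  set φ : ℝ → ℝ := fun x => x ^ 2 * exp (2 * c / √x)
  have hφ_pos : ∀ x ∈ Ici r₀, 0 < φ x := fun x hx =>
    mul_pos (pow_pos (hr₀.trans_le hx) 2) (exp_pos _)
  have hmono : MonotoneOn (fun x => A x / φ x) (Ici r₀) := by
    refine monotoneOn_div_of_mul_deriv_le (convex_Ici r₀) hA_deriv
      (fun x hx => (hasDerivAt_sq_mul_exp_div_sqrt c (hr₀.trans_le hx)).hasDerivWithinAt)
      (fun x hx => (hφ_pos x hx).ne') fun x hx => ?_
    rw [interior_Ici] at hx
    have hlogDeriv : (2 - c / √x) / x * A x ≤ A' x := by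
      rw [div_mul_eq_mul_div, div_le_iff₀ (hr₀.trans hx)]
      linarith [hA'_ge x (Ioi_subset_Ici_self hx)]
    nlinarith [hφ_pos x (Ioi_subset_Ici_self hx)]
  intro r hr
  have hexp_ge_one : 1 ≤ exp (2 * c / √r) := one_le_exp (by positivity)
  have hAr₀ : 0 ≤ A r₀ * (r / r₀) ^ 2 * exp (-2 * c / √r₀) :=
    mul_nonneg (mul_nonneg (hA_pos r₀ self_mem_Ici).le (sq_nonneg _)) (exp_pos _).le
  calc A r₀ * (r / r₀) ^ 2 * exp (-2 * c / √r₀)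
      ≤ A r₀ * (r / r₀) ^ 2 * exp (-2 * c / √r₀) * exp (2 * c / √r) :=
        le_mul_of_one_le_right hAr₀ hexp_ge_one
    _ = A r₀ / φ r₀ * φ r := by
        rw [neg_mul, neg_div, exp_neg]
        simp only [φ]
        field_simp
    _ ≤ A r := (le_div_iff₀ (hφ_pos r hr)).1 (hmono self_mem_Ici hr hr)
end

section
/- Quadratic growth from the logarithmic-scale integral inequality (nonparabolic case): let r₀ > 0 and let A : [r₀,∞) → ℝ be continuously differentiable with A(r) > 0 for all r ≥ r₀. Define a(r) := r · A'(r)/A(r), and suppose a(r) ≥ 0 for all r ≥ r₀ and a(t) − a(s) ≥ ∫ₛᵗ (1 − a(u)²/4) · (du/u) for all r₀ ≤ s ≤ t. Then there exists c > 0 such that A(r) ≥ c r² for all r ≥ r₀. -/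
/-!
With `a r = r A' r / A r`, the function `log (A r / r²)` has derivative `(a r - 2) / r`, so it
suffices to bound `∫ (a u - 2) / u` from below on `[r₀, r]`. The integrand `(1 - a²/4) / u` is
nonnegative while `0 ≤ a < 2`, so the integral inequality makes the level `2` a barrier: once `a`
reaches `2` it stays `≥ 2`. Up to that first time `r₁`, the pointwise bound
`a - 2 ≥ -2 (1 - a²/4)` (valid for `0 ≤ a ≤ 2`) gives `∫ (a - 2) / u ≥ -2 (a r₁ - a r₀) ≥ -4`,
and after it `(a - 2) / u ≥ 0`. Hence `A r ≥ e⁻⁴ A r₀ r² / r₀²`.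
-/

open intervalIntegral Set Real

theorem le_of_le_of_integral_le_sub {a g : ℝ → ℝ} {c r t : ℝ} (hrt : r ≤ t)
    (ha : ContinuousOn a (Icc r t)) (hg : ∀ u ∈ Icc r t, a u < c → 0 ≤ g u)
    (hint : ∀ s ∈ Icc r t, ∫ u in s..t, g u ≤ a t - a s) (hr : c ≤ a r) : c ≤ a t := by
  by_contra! hat
  set S := Icc r t ∩ a ⁻¹' Ici c
  have hS : IsCompact S :=
    isCompact_Icc.of_isClosed_subset (ha.preimage_isClosed_of_isClosed isClosed_Icc isClosed_Ici)
      inter_subset_left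
  obtain ⟨⟨hrs₀, hs₀t⟩, hs₀⟩ : sSup S ∈ S := hS.sSup_mem ⟨r, ⟨le_rfl, hrt⟩, hr⟩
  set s₀ := sSup S
  replace hs₀ : c ≤ a s₀ := hs₀
  have hs₀t' : s₀ < t := hs₀t.lt_of_ne fun h => by rw [h] at hs₀; linarith
  have hbelow : ∀ u ∈ Ioc s₀ t, a u < c := fun u hu =>
    not_le.mp fun h => hu.1.not_ge (le_csSup hS.bddAbove ⟨⟨hrs₀.trans hu.1.le, hu.2⟩, h⟩)
  -- Past the last time `a ≥ c`, the integrand is nonnegative, so `a` can only increase up to `t`.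
  have hmono : ∀ s ∈ Ioc s₀ t, a s ≤ a t := fun s hs => by
    have := hint s ⟨hrs₀.trans hs.1.le, hs.2⟩
    have : 0 ≤ ∫ u in s..t, g u := integral_nonneg hs.2 fun u hu =>
      hg u ⟨hrs₀.trans (hs.1.le.trans hu.1), hu.2⟩ (hbelow u ⟨hs.1.trans_le hu.1, hu.2⟩)
    linarith
  have : a s₀ ≤ a t :=
    ContinuousWithinAt.closure_le (by rw [closure_Ioc hs₀t'.ne]; exact ⟨le_rfl, hs₀t⟩)
      ((ha s₀ ⟨hrs₀, hs₀t⟩).mono fun u hu => ⟨hrs₀.trans hu.1.le, hu.2⟩) continuousWithinAt_const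
      hmono
  linarith

theorem neg_two_mul_integral_le_integral_sub_two_div {a : ℝ → ℝ} {s t : ℝ} (hs : 0 < s)
    (hst : s ≤ t) (ha : ContinuousOn a (Icc s t)) (ha_mem : ∀ u ∈ Icc s t, a u ∈ Icc 0 2) :
    -2 * ∫ u in s..t, (1 - a u ^ 2 / 4) / u ≤ ∫ u in s..t, (a u - 2) / u := by
  have hu : ∀ u ∈ Icc s t, u ≠ 0 := fun u hu => (hs.trans_le hu.1).ne'
  rw [← integral_const_mul]
  refine integral_mono_on hst ?_ ?_ fun u hu => ?_
  · exact ContinuousOn.intervalIntegrable_of_Icc hst <| continuousOn_const.mul <|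
      (continuousOn_const.sub ((ha.pow 2).div_const 4)).div continuousOn_id hu
  · exact ContinuousOn.intervalIntegrable_of_Icc hst <|
      (ha.sub continuousOn_const).div continuousOn_id hu
  · obtain ⟨h0, h2⟩ := ha_mem u hu
    rw [← mul_div_assoc]
    gcongr
    · exact (hs.trans_le hu.1).le
    · nlinarith

theorem div_sq_eq_mul_exp_integral {A A' : ℝ → ℝ} {s t : ℝ} (hs : 0 < s) (hst : s ≤ t)
    (hA : ∀ x ∈ Icc s t, HasDerivWithinAt A (A' x) (Icc s t) x) (hA' : ContinuousOn A' (Icc s t))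
    (hA_pos : ∀ x ∈ Icc s t, 0 < A x) :
    A t / t ^ 2 = A s / s ^ 2 * exp (∫ u in s..t, (u * A' u / A u - 2) / u) := by
  have hpos : ∀ x ∈ Icc s t, 0 < x := fun x hx => hs.trans_le hx.1
  have hAc : ContinuousOn A (Icc s t) := fun x hx => (hA x hx).continuousWithinAt
  have hFTC : ∫ u in s..t, (u * A' u / A u - 2) / u = log (A t / t ^ 2) - log (A s / s ^ 2) := by
    refine integral_eq_sub_of_hasDerivAt_of_le (f := fun u => log (A u / u ^ 2)) hst ?_
      (fun x hx => ?_) ?_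
    · exact (hAc.div (continuousOn_pow 2) fun x hx => (pow_pos (hpos x hx) 2).ne').log
        fun x hx' => (div_pos (hA_pos x hx') (pow_pos (hpos x hx') 2)).ne'
    · have hx' := Ioo_subset_Icc_self hx
      have hAx := hA_pos x hx'
      have hx0 := hpos x hx'
      refine ((((hA x hx').hasDerivAt (Icc_mem_nhds hx.1 hx.2)).div (hasDerivAt_pow 2 x)
        (pow_pos hx0 2).ne').log (div_pos hAx (pow_pos hx0 2)).ne').congr_deriv ?_
      simp only [Pi.div_apply]
      field_simp
      ring
    · exact ContinuousOn.intervalIntegrable_of_Icc hst <|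
        ((continuousOn_id.mul hA').div hAc fun x hx => (hA_pos x hx).ne').sub continuousOn_const
          |>.div continuousOn_id fun x hx' => (hpos x hx').ne'
  rw [hFTC, exp_sub, exp_log (div_pos (hA_pos t ⟨hst, le_rfl⟩) (pow_pos (hpos t ⟨hst, le_rfl⟩) 2)),
    exp_log (div_pos (hA_pos s ⟨le_rfl, hst⟩) (pow_pos hs 2)),
    mul_div_cancel₀ _ (div_pos (hA_pos s ⟨le_rfl, hst⟩) (pow_pos hs 2)).ne']

theorem neg_four_le_integral_sub_two_div {a : ℝ → ℝ} {r t : ℝ} (hr : 0 < r) (hrt : r ≤ t)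
    (ha : ContinuousOn a (Icc r t)) (ha_nonneg : ∀ u ∈ Icc r t, 0 ≤ a u)
    (hint : ∀ s ∈ Icc r t, ∀ s' ∈ Icc s t, ∫ u in s..s', (1 - a u ^ 2 / 4) / u ≤ a s' - a s) :
    -4 ≤ ∫ u in r..t, (a u - 2) / u := by
  have hIcc : ∀ {r₁}, r₁ ∈ Icc r t → Icc r r₁ ⊆ Icc r t := fun h => Icc_subset_Icc_right h.2
  have hbound : ∀ r₁ ∈ Icc r t, (∀ u ∈ Icc r r₁, a u ≤ 2) → -4 ≤ ∫ u in r..r₁, (a u - 2) / u :=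
    fun r₁ hr₁ h2 => by
      have hcmp := neg_two_mul_integral_le_integral_sub_two_div hr hr₁.1 (ha.mono (hIcc hr₁))
        fun u hu => ⟨ha_nonneg u (hIcc hr₁ hu), h2 u hu⟩
      have hint_r₁ := hint r ⟨le_rfl, hrt⟩ r₁ hr₁
      have ha_r := ha_nonneg r ⟨le_rfl, hrt⟩
      have ha_r₁ := h2 r₁ ⟨hr₁.1, le_rfl⟩
      linarith
  set S := Icc r t ∩ a ⁻¹' Ici 2
  by_cases hS_ne : S.Nonempty
  swap
  · exact hbound t ⟨hrt, le_rfl⟩ fun u hu => le_of_not_gt fun h => hS_ne ⟨u, hu, h.le⟩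
  -- Split `[r, t]` at the first time `r₁` where `a` reaches `2`: `a ≤ 2` before, `a ≥ 2` after.
  have hS : IsCompact S :=
    isCompact_Icc.of_isClosed_subset (ha.preimage_isClosed_of_isClosed isClosed_Icc isClosed_Ici)
      inter_subset_left
  obtain ⟨hr₁, hr₁2⟩ : sInf S ∈ S := hS.sInf_mem hS_ne
  set r₁ := sInf S
  replace hr₁2 : 2 ≤ a r₁ := hr₁2
  have hpos : ∀ u ∈ Icc r t, 0 < u := fun u hu => hr.trans_le hu.1
  have hafter : ∀ u ∈ Icc r₁ t, 2 ≤ a u := fun u hu =>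
    le_of_le_of_integral_le_sub hu.1 (ha.mono (Icc_subset_Icc hr₁.1 hu.2))
      (fun v hv hv2 => div_nonneg (by nlinarith [ha_nonneg v ⟨hr₁.1.trans hv.1, hv.2.trans hu.2⟩])
        (hpos v ⟨hr₁.1.trans hv.1, hv.2.trans hu.2⟩).le)
      (fun s hs => hint s ⟨hr₁.1.trans hs.1, hs.2.trans hu.2⟩ u ⟨hs.2, hu.2⟩) hr₁2
  have hbefore : -4 ≤ ∫ u in r..r₁, (a u - 2) / u := by
    rcases hr₁.1.eq_or_lt with h | h
    · simp [← h]
    refine hbound r₁ hr₁ fun u hu => ContinuousWithinAt.closure_le (by rwa [closure_Ico h.ne])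
      ((ha u (hIcc hr₁ hu)).mono fun v hv => hIcc hr₁ (Ico_subset_Icc_self hv))
      continuousWithinAt_const fun v hv => (not_le.mp fun h2 => hv.2.not_ge (csInf_le hS.bddBelow
        ⟨hIcc hr₁ (Ico_subset_Icc_self hv), h2⟩)).le
  have hintegrable : ∀ {x y}, x ∈ Icc r t → y ∈ Icc r t →
      IntervalIntegrable (fun u => (a u - 2) / u) MeasureTheory.volume x y := fun hx hy =>
    ((ha.sub continuousOn_const).div continuousOn_id fun u hu => (hpos u hu).ne').mono
      (uIcc_subset_Icc hx hy) |>.intervalIntegrable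
  rw [← integral_add_adjacent_intervals (hintegrable ⟨le_rfl, hrt⟩ hr₁)
    (hintegrable hr₁ ⟨hrt, le_rfl⟩)]
  have : 0 ≤ ∫ u in r₁..t, (a u - 2) / u := integral_nonneg hr₁.2 fun u hu =>
    div_nonneg (sub_nonneg.mpr (hafter u hu)) (hpos u ⟨hr₁.1.trans hu.1, hu.2⟩).le
  linarith

/-- Quadratic growth from the logarithmic-scale integral inequality (nonparabolic case):
if `A` is `C¹` and positive on `[r₀, ∞)` (with `r₀ > 0`) and `a r := r A' r / A r`
is nonnegative and satisfies `a t - a s ≥ ∫ₛᵗ (1 - a(u)²/4) du/u`, then there is `c > 0`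
with `A r ≥ c r²` for all `r ≥ r₀`. -/
theorem quadratic_growth_nonparabolic (r₀ : ℝ) (hr₀ : 0 < r₀) (A A' : ℝ → ℝ)
    (hA_deriv : ∀ r ∈ Set.Ici r₀, HasDerivWithinAt A (A' r) (Set.Ici r₀) r)
    (hA'_cont : ContinuousOn A' (Set.Ici r₀))
    (hA_pos : ∀ r ∈ Set.Ici r₀, 0 < A r)
    (ha_nonneg : ∀ r ∈ Set.Ici r₀, 0 ≤ r * A' r / A r)
    (ha_int : ∀ s t : ℝ, r₀ ≤ s → s ≤ t →
      (t * A' t / A t) - (s * A' s / A s) ≥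
        ∫ u in s..t, (1 - (u * A' u / A u)^2 / 4) / u) :
    ∃ c > 0, ∀ r ∈ Set.Ici r₀, A r ≥ c * r^2 := by
  have hA_cont : ContinuousOn A (Ici r₀) := fun x hx => (hA_deriv x hx).continuousWithinAt
  have ha_cont : ContinuousOn (fun r => r * A' r / A r) (Ici r₀) :=
    (continuousOn_id.mul hA'_cont).div hA_cont fun x hx => (hA_pos x hx).ne'
  have hA₀ := hA_pos r₀ self_mem_Ici
  refine ⟨A r₀ / r₀ ^ 2 * exp (-4), by positivity, fun r hr => ?_⟩
  have hrep := div_sq_eq_mul_exp_integral hr₀ hr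
    (fun x hx => (hA_deriv x hx.1).mono Icc_subset_Ici_self) (hA'_cont.mono Icc_subset_Ici_self)
    fun x hx => hA_pos x hx.1
  have hbound := neg_four_le_integral_sub_two_div hr₀ hr (ha_cont.mono Icc_subset_Ici_self)
    (fun u hu => ha_nonneg u hu.1) fun s hs s' hs' => ha_int s s' hs.1 hs'.1
  have hr2 : 0 < r ^ 2 := by have := hr₀.trans_le hr; positivity
  calc A r₀ / r₀ ^ 2 * exp (-4) * r ^ 2
      ≤ A r₀ / r₀ ^ 2 * exp (∫ u in r₀..r, (u * A' u / A u - 2) / u) * r ^ 2 := by gcongr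
    _ = A r := by rw [← hrep, div_mul_cancel₀ _ hr2.ne']
end
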